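/- arXiv:1812.06127 — 2 statements merged into one kernel-verified Lean document; each statement's English description precedes it below -/
import Mathlib

section
/- FedProx convergence with variable inexactness levels. Assume each F k is differentiable with L-Lipschitz gradient and satisfies the curvature lower bound with constant L₋, where 0 ≤ L₋ < μ and μ̄ := μ − L₋ > 0. Let wᵗ ∈ E, let the local functions be B-dissimilar at wᵗ (B ≥ 0), let γ : Fin N → ℝ with 0 ≤ γ k ≤ 1 for all k, and for each device k let w k⁺ be a γ k-inexact solution of min h k. Let Γ ∈ [0,1] satisfy γ k ≤ Γ for all k, let K ≥ 1, and set ρ := 1/μ − Γ·B/μ − √2·B(1+Γ)/(μ̄·√K) − L·B(1+Γ)/(μ̄·μ) − L·(1+Γ)²·B²/(2μ̄²) − L·B²·(1+Γ)²·(2√(2K)+2)/(μ̄²·K). Then ∑_{s : Fin K → Fin N} (∏ j, p (s j)) · f((1/K)·∑ j, w (s j)⁺) ≤ f(wᵗ) − ρ·‖∇f(wᵗ)‖². -/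
/-!
Write `d k := w k⁺ - wᵗ`. Since `w ↦ ∇F k w + μ (w - wᵗ)` is `(μ - L₋)`-strongly monotone,
`γ k`-inexactness gives `‖d k‖ ≤ (1 + Γ) / (μ - L₋) * ‖∇F k wᵗ‖`, and together with the Lipschitz
bound on `∇F k` also `‖μ d k + ∇F k wᵗ‖ ≤ (Γ + L (1 + Γ) / (μ - L₋)) * ‖∇F k wᵗ‖`. Averaging over
`p` and using `B`-dissimilarity bounds `∑ p k ‖d k‖²` and `‖μ ∑ p k d k + ∇f wᵗ‖` by multiples of
`‖∇f wᵗ‖`; the latter controls `⟪∇f wᵗ, ∑ p k d k⟫`.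

The descent lemma bounds `f` by the convex quadratic model
`Q w = f wᵗ + ⟪∇f wᵗ, w - wᵗ⟫ + L / 2 * ‖w - wᵗ‖²`. By Jensen, `Q` at the average of the `K`
sampled points is at most the average of `Q` at these points, whose expectation is
`∑ p k * Q (w k⁺)`. So sampling costs nothing, and the `K`-dependent terms of `ρ` are slack.
-/

open scoped RealInnerProductSpace NNReal
open Set AffineMap

section Gradient

variable {E : Type*} [NormedAddCommGroup E] [InnerProductSpace ℝ E] [CompleteSpace E]
  {f g : E → ℝ} {f' g' x : E}

theorem HasGradientAt.add (hf : HasGradientAt f f' x) (hg : HasGradientAt g g' x) :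
    HasGradientAt (fun y => f y + g y) (f' + g') x := by
  rw [hasGradientAt_iff_hasFDerivAt, map_add]
  exact (hasGradientAt_iff_hasFDerivAt.mp hf).add (hasGradientAt_iff_hasFDerivAt.mp hg)

theorem HasGradientAt.const_mul (hf : HasGradientAt f f' x) (c : ℝ) :
    HasGradientAt (fun y => c * f y) (c • f') x := by
  rw [hasGradientAt_iff_hasFDerivAt, map_smulₛₗ, RCLike.conj_to_real]
  exact (hasGradientAt_iff_hasFDerivAt.mp hf).const_mul c

theorem HasGradientAt.sum {ι : Type*} (s : Finset ι) {f : ι → E → ℝ} {f' : ι → E}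
    (h : ∀ i ∈ s, HasGradientAt (f i) (f' i) x) :
    HasGradientAt (fun y => ∑ i ∈ s, f i y) (∑ i ∈ s, f' i) x := by
  rw [hasGradientAt_iff_hasFDerivAt, map_sum]
  exact HasFDerivAt.fun_sum fun i hi => hasGradientAt_iff_hasFDerivAt.mp (h i hi)

theorem hasGradientAt_norm_sq (x : E) : HasGradientAt (fun w => ‖w‖ ^ 2) ((2 : ℝ) • x) x := by
  convert hasFDerivAt_iff_hasGradientAt.mp (hasStrictFDerivAt_norm_sq x).hasFDerivAt
  apply (InnerProductSpace.toDual ℝ E).injective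
  ext y
  simp

theorem HasGradientAt.hasDerivAt_comp_lineMap {y : E} {t : ℝ}
    (h : HasGradientAt g g' (lineMap x y t)) :
    HasDerivAt (fun s : ℝ => g (lineMap x y s)) ⟪g', y - x⟫ t := by
  have := (hasGradientAt_iff_hasFDerivAt.mp h).comp_hasDerivAt t hasDerivAt_lineMap
  simp only [InnerProductSpace.toDual_apply_apply] at this
  exact this

theorem ConvexOn.inner_sub_nonneg_of_hasGradientAt (hg : ConvexOn ℝ univ g) {a b a' b' : E}
    (ha : HasGradientAt g a' a) (hb : HasGradientAt g b' b) : 0 ≤ ⟪a' - b', a - b⟫ := by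
  have hline : ConvexOn ℝ univ fun t : ℝ => g (lineMap b a t) := hg.comp_affineMap _
  have h0 := hline.le_slope_of_hasDerivAt (mem_univ 0) (mem_univ 1) one_pos
    (HasGradientAt.hasDerivAt_comp_lineMap (t := 0) (by simpa using hb))
  have h1 := hline.slope_le_of_hasDerivAt (mem_univ 0) (mem_univ 1) one_pos
    (HasGradientAt.hasDerivAt_comp_lineMap (t := 1) (by simpa using ha))
  rw [inner_sub_left]
  linarith

theorem neg_mul_norm_sub_sq_le_inner_gradient_sub (hg : Differentiable ℝ g) {c : ℝ}
    (hconv : ConvexOn ℝ univ fun w => g w + c / 2 * ‖w‖ ^ 2) (a b : E) :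
    -c * ‖a - b‖ ^ 2 ≤ ⟪gradient g a - gradient g b, a - b⟫ := by
  have hgrad (x : E) :
      HasGradientAt (fun w => g w + c / 2 * ‖w‖ ^ 2) (gradient g x + c • x) x := by
    convert (hg x).hasGradientAt.add ((hasGradientAt_norm_sq x).const_mul (c / 2)) using 2
    module
  have hmono := hconv.inner_sub_nonneg_of_hasGradientAt (hgrad a) (hgrad b)
  rw [add_sub_add_comm, ← smul_sub, inner_add_left, real_inner_smul_left,
    real_inner_self_eq_norm_sq] at hmono
  linarith

theorem Differentiable.apply_le_of_lipschitzWith_gradient {K : ℝ≥0} (hg : Differentiable ℝ g)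
    (hK : LipschitzWith K (gradient g)) (x y : E) :
    g y ≤ g x + ⟪gradient g x, y - x⟫ + K / 2 * ‖y - x‖ ^ 2 := by
  set ψ : ℝ → ℝ := fun t =>
    g (lineMap x y t) - t * ⟪gradient g x, y - x⟫ - K / 2 * t ^ 2 * ‖y - x‖ ^ 2
  have hψ (t : ℝ) : HasDerivAt ψ
      (⟪gradient g (lineMap x y t) - gradient g x, y - x⟫ - K * t * ‖y - x‖ ^ 2) t := by
    have := (((hg (lineMap x y t)).hasGradientAt.hasDerivAt_comp_lineMap).sub
      ((hasDerivAt_id t).mul_const ⟪gradient g x, y - x⟫)).sub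
      (((hasDerivAt_pow 2 t).const_mul (K / 2 : ℝ)).mul_const (‖y - x‖ ^ 2))
    refine this.congr_deriv ?_
    rw [inner_sub_left]
    push_cast
    ring
  obtain ⟨ξ, ⟨hξ0, -⟩, hslope⟩ := exists_hasDerivAt_eq_slope ψ _ one_pos
    (fun t _ => (hψ t).continuousAt.continuousWithinAt) (fun t _ => hψ t)
  have hlip : ⟪gradient g (lineMap x y ξ) - gradient g x, y - x⟫ ≤ K * ξ * ‖y - x‖ ^ 2 := by
    calc _ ≤ ‖gradient g (lineMap x y ξ) - gradient g x‖ * ‖y - x‖ := real_inner_le_norm _ _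
      _ ≤ K * ‖lineMap x y ξ - x‖ * ‖y - x‖ := by
          gcongr
          exact hK.norm_sub_le _ _
      _ = K * ξ * ‖y - x‖ ^ 2 := by
          rw [lineMap_apply_module', add_sub_cancel_right, norm_smul,
            Real.norm_of_nonneg hξ0.le]
          ring
  simp only [ψ, lineMap_apply_zero, lineMap_apply_one] at hslope
  linarith

end Gradient

section WeightedAverage

variable {α : Type*} [Fintype α] {p : α → ℝ}

theorem LipschitzWith.sum_smul {β E : Type*} [PseudoMetricSpace β] [SeminormedAddCommGroup E]
    [NormedSpace ℝ E] {φ : α → β → E} {K : ℝ≥0} (hφ : ∀ a, LipschitzWith K (φ a))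
    (hp0 : ∀ a, 0 ≤ p a) (hp1 : ∑ a, p a = 1) :
    LipschitzWith K fun x => ∑ a, p a • φ a x := by
  refine LipschitzWith.of_dist_le_mul fun x y => ?_
  rw [dist_eq_norm, ← Finset.sum_sub_distrib]
  calc ‖∑ a, (p a • φ a x - p a • φ a y)‖ ≤ ∑ a, p a * dist (φ a x) (φ a y) := by
        refine (norm_sum_le _ _).trans_eq (Finset.sum_congr rfl fun a _ => ?_)
        rw [← smul_sub, norm_smul, Real.norm_of_nonneg (hp0 a), dist_eq_norm]
    _ ≤ ∑ a, p a * (K * dist x y) :=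
        Finset.sum_le_sum fun a _ => mul_le_mul_of_nonneg_left ((hφ a).dist_le_mul x y) (hp0 a)
    _ = K * dist x y := by rw [← Finset.sum_mul, hp1, one_mul]

theorem sum_mul_norm_sq_le_of_norm_le {E : Type*} [SeminormedAddCommGroup E]
    (hp0 : ∀ a, 0 ≤ p a) {v : α → E} {u : α → ℝ} {C M : ℝ}
    (hv : ∀ a, ‖v a‖ ≤ C * u a) (hu : ∑ a, p a * u a ^ 2 ≤ M ^ 2) :
    ∑ a, p a * ‖v a‖ ^ 2 ≤ (C * M) ^ 2 := by
  calc ∑ a, p a * ‖v a‖ ^ 2 ≤ ∑ a, p a * (C * u a) ^ 2 :=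
        Finset.sum_le_sum fun a _ => mul_le_mul_of_nonneg_left
          (pow_le_pow_left₀ (norm_nonneg _) (hv a) 2) (hp0 a)
    _ = C ^ 2 * ∑ a, p a * u a ^ 2 := by
        rw [Finset.mul_sum]
        exact Finset.sum_congr rfl fun a _ => by ring
    _ ≤ (C * M) ^ 2 := by
        rw [mul_pow]
        exact mul_le_mul_of_nonneg_left hu (sq_nonneg C)

theorem norm_sum_smul_le_of_sum_mul_norm_sq_le {E : Type*} [SeminormedAddCommGroup E]
    [NormedSpace ℝ E] (hp0 : ∀ a, 0 ≤ p a) (hp1 : ∑ a, p a = 1) {v : α → E} {M : ℝ}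
    (hM : 0 ≤ M) (hv : ∑ a, p a * ‖v a‖ ^ 2 ≤ M ^ 2) :
    ‖∑ a, p a • v a‖ ≤ M := by
  have hjensen : ‖∑ a, p a • v a‖ ^ 2 ≤ ∑ a, p a * ‖v a‖ ^ 2 :=
    (convexOn_univ_norm.pow (fun _ _ => norm_nonneg _) 2).map_sum_le (fun a _ => hp0 a) hp1
      (fun _ _ => mem_univ _)
  exact (sq_le_sq₀ (norm_nonneg _) hM).1 (hjensen.trans hv)

end WeightedAverage

section Sampling

variable {ι α : Type*} [Fintype ι] [DecidableEq ι] [Fintype α] {p : α → ℝ}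

theorem sum_prod_mul_apply (hp : ∑ a, p a = 1) (j₀ : ι) (φ : α → ℝ) :
    ∑ s : ι → α, (∏ j, p (s j)) * φ (s j₀) = ∑ a, p a * φ a := by
  -- Tilting the `j₀`-th factor by `φ` turns the sum into a product of sums.
  have htilt (s : ι → α) :
      (∏ j, p (s j)) * φ (s j₀) = ∏ j, p (s j) * if j = j₀ then φ (s j) else 1 := by
    rw [Finset.prod_mul_distrib, Finset.prod_ite_eq']
    simp
  rw [Finset.sum_congr rfl fun s _ => htilt s,
    ← Fintype.prod_sum fun j a => p a * if j = j₀ then φ a else 1,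
    Fintype.prod_eq_single j₀ fun j hj => by simp [hj, hp]]
  simp

theorem sum_prod_mul_sum_apply (hp : ∑ a, p a = 1) (φ : α → ℝ) :
    ∑ s : ι → α, (∏ j, p (s j)) * ∑ j, φ (s j) = Fintype.card ι * ∑ a, p a * φ a := by
  simp_rw [Finset.mul_sum]
  rw [Finset.sum_comm]
  simp_rw [← Finset.mul_sum, sum_prod_mul_apply hp]
  simp

theorem ConvexOn.sum_prod_mul_apply_average_le [Nonempty ι] {E : Type*} [AddCommGroup E]
    [Module ℝ E] {Q : E → ℝ} (hQ : ConvexOn ℝ univ Q) (hp0 : ∀ a, 0 ≤ p a)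
    (hp1 : ∑ a, p a = 1) (w : α → E) :
    ∑ s : ι → α, (∏ j, p (s j)) * Q ((1 / (Fintype.card ι : ℝ)) • ∑ j, w (s j))
      ≤ ∑ a, p a * Q (w a) := by
  have hn : (0 : ℝ) < Fintype.card ι := by exact_mod_cast Fintype.card_pos
  have hjensen (s : ι → α) : Q ((1 / (Fintype.card ι : ℝ)) • ∑ j, w (s j))
      ≤ 1 / (Fintype.card ι : ℝ) * ∑ j, Q (w (s j)) := by
    rw [Finset.smul_sum, Finset.mul_sum]
    refine hQ.map_sum_le (fun _ _ => by positivity) ?_ (fun _ _ => mem_univ _)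
    simp [Finset.card_univ, hn.ne']
  calc _ ≤ ∑ s : ι → α, (∏ j, p (s j)) * (1 / (Fintype.card ι : ℝ) * ∑ j, Q (w (s j))) :=
        Finset.sum_le_sum fun s _ => mul_le_mul_of_nonneg_left (hjensen s)
          (Finset.prod_nonneg fun j _ => hp0 _)
    _ = 1 / (Fintype.card ι : ℝ) * ∑ s : ι → α, (∏ j, p (s j)) * ∑ j, Q (w (s j)) := by
        rw [Finset.mul_sum]
        exact Finset.sum_congr rfl fun s _ => by ring
    _ = ∑ a, p a * Q (w a) := by
        rw [sum_prod_mul_sum_apply hp1 fun a => Q (w a)]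
        field_simp

theorem Differentiable.sum_prod_mul_apply_average_le [Nonempty ι] {E : Type*}
    [NormedAddCommGroup E] [InnerProductSpace ℝ E] [CompleteSpace E] {f : E → ℝ} {K : ℝ≥0}
    (hf : Differentiable ℝ f) (hK : LipschitzWith K (gradient f)) (hp0 : ∀ a, 0 ≤ p a)
    (hp1 : ∑ a, p a = 1) (x : E) (w : α → E) :
    ∑ s : ι → α, (∏ j, p (s j)) * f ((1 / (Fintype.card ι : ℝ)) • ∑ j, w (s j))
      ≤ f x + ⟪gradient f x, ∑ a, p a • (w a - x)⟫ + K / 2 * ∑ a, p a * ‖w a - x‖ ^ 2 := by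
  set Q : E → ℝ := fun y => f x + ⟪gradient f x, y - x⟫ + K / 2 * ‖y - x‖ ^ 2
  have hQ : ConvexOn ℝ univ Q := by
    have hlin : ConvexOn ℝ univ fun y => f x + ⟪gradient f x, y - x⟫ :=
      (((innerSL ℝ (gradient f x)).toLinearMap.convexOn convex_univ).add_const
        (f x - ⟪gradient f x, x⟫)).congr fun y _ => by simp [inner_sub_right]; ring
    have hsq : ConvexOn ℝ univ fun y => K / 2 * ‖y - x‖ ^ 2 := by
      simpa [dist_eq_norm] using ((convexOn_univ_dist x).pow (fun _ _ => dist_nonneg) 2).smul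
        (by positivity : (0 : ℝ) ≤ K / 2)
    exact hlin.add hsq
  calc _ ≤ ∑ s : ι → α, (∏ j, p (s j)) * Q ((1 / (Fintype.card ι : ℝ)) • ∑ j, w (s j)) :=
        Finset.sum_le_sum fun s _ => mul_le_mul_of_nonneg_left
          (hf.apply_le_of_lipschitzWith_gradient hK x _) (Finset.prod_nonneg fun j _ => hp0 _)
    _ ≤ ∑ a, p a * Q (w a) := hQ.sum_prod_mul_apply_average_le hp0 hp1 w
    _ = _ := by
        simp only [Q, mul_add, Finset.sum_add_distrib, ← Finset.sum_mul, hp1, one_mul,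
          inner_sum, real_inner_smul_right, Finset.mul_sum]
        congr 1
        exact Finset.sum_congr rfl fun a _ => by ring

end Sampling

section InexactProximalStep

variable {E : Type*} [NormedAddCommGroup E] [InnerProductSpace ℝ E] [CompleteSpace E]
  {c μ : ℝ} {x : E}

theorem norm_sub_le_of_inexact {g : E → ℝ} (hg : Differentiable ℝ g)
    (hconv : ConvexOn ℝ univ fun w => g w + c / 2 * ‖w‖ ^ 2) (hcμ : c < μ) {γ : ℝ} {y : E}
    (hy : ‖gradient g y + μ • (y - x)‖ ≤ γ * ‖gradient g x‖) :
    ‖y - x‖ ≤ (1 + γ) / (μ - c) * ‖gradient g x‖ := by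
  rw [div_mul_eq_mul_div, le_div_iff₀ (sub_pos.2 hcμ), mul_comm]
  have hmono := neg_mul_norm_sub_sq_le_inner_gradient_sub hg hconv y x
  have hlower : (μ - c) * ‖y - x‖ ^ 2 ≤ ⟪gradient g y + μ • (y - x) - gradient g x, y - x⟫ := by
    rw [add_sub_right_comm, inner_add_left, real_inner_smul_left, real_inner_self_eq_norm_sq]
    linarith
  have hupper : ⟪gradient g y + μ • (y - x) - gradient g x, y - x⟫
      ≤ (1 + γ) * ‖gradient g x‖ * ‖y - x‖ := by
    refine (real_inner_le_norm _ _).trans (mul_le_mul_of_nonneg_right ?_ (norm_nonneg _))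
    linarith [norm_sub_le (gradient g y + μ • (y - x)) (gradient g x)]
  rcases (norm_nonneg (y - x)).eq_or_lt with hzero | hpos
  · rw [← hzero, mul_zero]
    nlinarith [norm_nonneg (gradient g y + μ • (y - x)), norm_nonneg (gradient g x)]
  · exact le_of_mul_le_mul_right (by nlinarith) hpos

theorem norm_smul_sub_add_gradient_le_of_inexact {g : E → ℝ} (hg : Differentiable ℝ g)
    (hconv : ConvexOn ℝ univ fun w => g w + c / 2 * ‖w‖ ^ 2) {K : ℝ≥0}
    (hK : LipschitzWith K (gradient g)) (hcμ : c < μ) {γ : ℝ} {y : E}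
    (hy : ‖gradient g y + μ • (y - x)‖ ≤ γ * ‖gradient g x‖) :
    ‖μ • (y - x) + gradient g x‖ ≤ (γ + K * ((1 + γ) / (μ - c))) * ‖gradient g x‖ := by
  calc ‖μ • (y - x) + gradient g x‖
      = ‖(gradient g y + μ • (y - x)) - (gradient g y - gradient g x)‖ := by congr 1; abel
    _ ≤ γ * ‖gradient g x‖ + K * ‖y - x‖ :=
        (norm_sub_le _ _).trans (add_le_add hy (hK.norm_sub_le _ _))
    _ ≤ γ * ‖gradient g x‖ + K * ((1 + γ) / (μ - c) * ‖gradient g x‖) := by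
        gcongr
        exact norm_sub_le_of_inexact hg hconv hcμ hy
    _ = (γ + K * ((1 + γ) / (μ - c))) * ‖gradient g x‖ := by ring

variable {α : Type*} [Fintype α] {p : α → ℝ} {F : α → E → ℝ} {γ : α → ℝ} {Γ M : ℝ} {w : α → E}

theorem sum_mul_norm_sub_sq_le_of_inexact (hp0 : ∀ a, 0 ≤ p a)
    (hF : ∀ a, Differentiable ℝ (F a))
    (hconv : ∀ a, ConvexOn ℝ univ fun v => F a v + c / 2 * ‖v‖ ^ 2) (hcμ : c < μ)
    (hw : ∀ a, ‖gradient (F a) (w a) + μ • (w a - x)‖ ≤ γ a * ‖gradient (F a) x‖)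
    (hγ : ∀ a, γ a ≤ Γ) (hM : ∑ a, p a * ‖gradient (F a) x‖ ^ 2 ≤ M ^ 2) :
    ∑ a, p a * ‖w a - x‖ ^ 2 ≤ ((1 + Γ) / (μ - c) * M) ^ 2 := by
  refine sum_mul_norm_sq_le_of_norm_le hp0 (fun a => ?_) hM
  refine (norm_sub_le_of_inexact (hF a) (hconv a) hcμ (hw a)).trans ?_
  have := sub_pos.2 hcμ
  gcongr
  exact hγ a

theorem norm_smul_sum_smul_sub_add_le_of_inexact (hp0 : ∀ a, 0 ≤ p a) (hp1 : ∑ a, p a = 1)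
    (hF : ∀ a, Differentiable ℝ (F a))
    (hconv : ∀ a, ConvexOn ℝ univ fun v => F a v + c / 2 * ‖v‖ ^ 2) {K : ℝ≥0}
    (hK : ∀ a, LipschitzWith K (gradient (F a))) (hcμ : c < μ)
    (hw : ∀ a, ‖gradient (F a) (w a) + μ • (w a - x)‖ ≤ γ a * ‖gradient (F a) x‖)
    (hγ : ∀ a, γ a ≤ Γ) (hΓ : 0 ≤ Γ) (hM0 : 0 ≤ M)
    (hM : ∑ a, p a * ‖gradient (F a) x‖ ^ 2 ≤ M ^ 2) :
    ‖μ • ∑ a, p a • (w a - x) + ∑ a, p a • gradient (F a) x‖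
      ≤ (Γ + K * ((1 + Γ) / (μ - c))) * M := by
  have hμc := sub_pos.2 hcμ
  rw [Finset.smul_sum, ← Finset.sum_add_distrib]
  simp_rw [smul_comm μ, ← smul_add]
  refine norm_sum_smul_le_of_sum_mul_norm_sq_le hp0 hp1 (by positivity)
    (sum_mul_norm_sq_le_of_norm_le hp0 (fun a => ?_) hM)
  refine (norm_smul_sub_add_gradient_le_of_inexact (hF a) (hconv a) (hK a) hcμ (hw a)).trans ?_
  gcongr
  all_goals exact hγ a

end InexactProximalStep

theorem inner_le_of_norm_smul_add_le {E : Type*} [NormedAddCommGroup E] [InnerProductSpace ℝ E]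
    {g u : E} {μ θ : ℝ} (hμ : 0 < μ) (h : ‖μ • u + g‖ ≤ θ * ‖g‖) :
    ⟪g, u⟫ ≤ (θ - 1) / μ * ‖g‖ ^ 2 := by
  have hexpand : μ * ⟪g, u⟫ = ⟪g, μ • u + g⟫ - ‖g‖ ^ 2 := by
    rw [inner_add_right, real_inner_smul_right, real_inner_self_eq_norm_sq]
    ring
  have hcs : ⟪g, μ • u + g⟫ ≤ ‖g‖ * (θ * ‖g‖) :=
    (real_inner_le_norm _ _).trans (mul_le_mul_of_nonneg_left h (norm_nonneg _))
  rw [div_mul_eq_mul_div, le_div_iff₀ hμ]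
  nlinarith

theorem fedprox_rate_le {μ Lm L B Γ ρ : ℝ} {K : ℕ} (hμ0 : 0 < μ) (hμ : Lm < μ) (hL : 0 ≤ L)
    (hB : 0 ≤ B) (hΓ : 0 ≤ Γ)
    (hρ : ρ = 1 / μ - Γ * B / μ
        - Real.sqrt 2 * B * (1 + Γ) / ((μ - Lm) * Real.sqrt K)
        - L * B * (1 + Γ) / ((μ - Lm) * μ)
        - L * (1 + Γ) ^ 2 * B ^ 2 / (2 * (μ - Lm) ^ 2)
        - L * B ^ 2 * (1 + Γ) ^ 2 * (2 * Real.sqrt (2 * K) + 2) / ((μ - Lm) ^ 2 * K)) (G : ℝ) :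
    ((Γ + L * ((1 + Γ) / (μ - Lm))) * B - 1) / μ * G ^ 2
      + L / 2 * ((1 + Γ) / (μ - Lm) * (B * G)) ^ 2 ≤ -(ρ * G ^ 2) := by
  have hμLm := sub_pos.2 hμ
  have hT1 : 0 ≤ Real.sqrt 2 * B * (1 + Γ) / ((μ - Lm) * Real.sqrt K) := by positivity
  have hT2 : 0 ≤ L * B ^ 2 * (1 + Γ) ^ 2 * (2 * Real.sqrt (2 * K) + 2) / ((μ - Lm) ^ 2 * K) := by
    positivity
  have hsum : ((Γ + L * ((1 + Γ) / (μ - Lm))) * B - 1) / μ * G ^ 2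
      + L / 2 * ((1 + Γ) / (μ - Lm) * (B * G)) ^ 2
      = -((1 / μ - Γ * B / μ - L * B * (1 + Γ) / ((μ - Lm) * μ)
        - L * (1 + Γ) ^ 2 * B ^ 2 / (2 * (μ - Lm) ^ 2)) * G ^ 2) := by
    field_simp
    ring
  rw [hsum, neg_le_neg_iff]
  exact mul_le_mul_of_nonneg_right (by linarith) (sq_nonneg G)

theorem fedprox_variable_gamma_descent_general
    {E : Type*} [NormedAddCommGroup E] [InnerProductSpace ℝ E] [CompleteSpace E]
    {N : ℕ} (p : Fin N → ℝ)
    (hp : ∀ k, 0 ≤ p k) (hp1 : ∑ k, p k = 1)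
    (F : Fin N → E → ℝ) (f : E → ℝ) (hf : ∀ w, f w = ∑ k, p k * F k w)
    {L : ℝ} (hL : 0 ≤ L)
    (hFdiff : ∀ k, Differentiable ℝ (F k))
    (hFlip : ∀ k, LipschitzWith (Real.toNNReal L) (gradient (F k)))
    {Lm μ : ℝ} (hLm : 0 ≤ Lm) (hμ : Lm < μ)
    (hcurv : ∀ k, ConvexOn ℝ Set.univ (fun w => F k w + (Lm / 2) * ‖w‖ ^ 2))
    (wt : E) {B : ℝ} (hB : 0 ≤ B)
    (hdissim : ∑ k, p k * ‖gradient (F k) wt‖ ^ 2 ≤ B ^ 2 * ‖gradient f wt‖ ^ 2)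
    (γ : Fin N → ℝ)
    (wplus : Fin N → E)
    (hinexact : ∀ k,
      ‖gradient (F k) (wplus k) + μ • (wplus k - wt)‖ ≤ γ k * ‖gradient (F k) wt‖)
    {Γ : ℝ} (hΓ0 : 0 ≤ Γ) (hγΓ : ∀ k, γ k ≤ Γ)
    {K : ℕ} (hK : 1 ≤ K)
    (ρ : ℝ)
    (hρ : ρ = 1 / μ - Γ * B / μ
        - Real.sqrt 2 * B * (1 + Γ) / ((μ - Lm) * Real.sqrt K)
        - L * B * (1 + Γ) / ((μ - Lm) * μ)
        - L * (1 + Γ) ^ 2 * B ^ 2 / (2 * (μ - Lm) ^ 2)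
        - L * B ^ 2 * (1 + Γ) ^ 2 * (2 * Real.sqrt (2 * K) + 2) / ((μ - Lm) ^ 2 * K)) :
    ∑ s : Fin K → Fin N, (∏ j, p (s j)) * f ((1 / (K : ℝ)) • ∑ j, wplus (s j))
      ≤ f wt - ρ * ‖gradient f wt‖ ^ 2 := by
  have hLK : (Real.toNNReal L : ℝ) = L := Real.coe_toNNReal L hL
  have hfgrad (w : E) : HasGradientAt f (∑ k, p k • gradient (F k) w) w := by
    rw [show f = fun w => ∑ k, p k * F k w from funext hf]
    exact HasGradientAt.sum Finset.univ fun k _ => (hFdiff k w).hasGradientAt.const_mul (p k)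
  have hflip : LipschitzWith (Real.toNNReal L) (gradient f) := by
    rw [gradient_eq hfgrad]
    exact LipschitzWith.sum_smul hFlip hp hp1
  have hM : ∑ k, p k * ‖gradient (F k) wt‖ ^ 2 ≤ (B * ‖gradient f wt‖) ^ 2 := by rwa [mul_pow]
  have hdrift : ‖μ • ∑ k, p k • (wplus k - wt) + gradient f wt‖
      ≤ (Γ + L * ((1 + Γ) / (μ - Lm))) * B * ‖gradient f wt‖ := by
    rw [mul_assoc]
    conv_lhs => rw [(hfgrad wt).gradient]
    simpa only [hLK] using norm_smul_sum_smul_sub_add_le_of_inexact hp hp1 hFdiff hcurv hFlip hμ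
      hinexact hγΓ hΓ0 (by positivity) hM
  have hinner := inner_le_of_norm_smul_add_le (hLm.trans_lt hμ) hdrift
  have hsecond := sum_mul_norm_sub_sq_le_of_inexact hp hFdiff hcurv hμ hinexact hγΓ hM
  have : Nonempty (Fin K) := ⟨⟨0, hK⟩⟩
  have hfdiff : Differentiable ℝ f := fun w => (hfgrad w).differentiableAt
  have hsample := hfdiff.sum_prod_mul_apply_average_le (ι := Fin K) hflip hp hp1 wt wplus
  simp only [hLK, Fintype.card_fin] at hsample
  linarith [mul_le_mul_of_nonneg_left hsecond (by positivity : (0 : ℝ) ≤ L / 2),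
    fedprox_rate_le (hLm.trans_lt hμ) hμ hL hB hΓ0 hρ ‖gradient f wt‖]

/-- FedProx convergence with variable inexactness levels. -/
theorem fedprox_variable_gamma_descent
    {E : Type*} [NormedAddCommGroup E] [InnerProductSpace ℝ E] [CompleteSpace E]
    {N : ℕ} (hN : 1 ≤ N) (p : Fin N → ℝ)
    (hp : ∀ k, 0 ≤ p k) (hp1 : ∑ k, p k = 1)
    (F : Fin N → E → ℝ) (f : E → ℝ) (hf : ∀ w, f w = ∑ k, p k * F k w)
    {L : ℝ} (hL : 0 ≤ L)
    (hFdiff : ∀ k, Differentiable ℝ (F k))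
    (hFlip : ∀ k, LipschitzWith (Real.toNNReal L) (gradient (F k)))
    {Lm μ : ℝ} (hLm : 0 ≤ Lm) (hμ : Lm < μ)
    (hcurv : ∀ k, ConvexOn ℝ Set.univ (fun w => F k w + (Lm / 2) * ‖w‖ ^ 2))
    (wt : E) {B : ℝ} (hB : 0 ≤ B)
    (hdissim : ∑ k, p k * ‖gradient (F k) wt‖ ^ 2 ≤ B ^ 2 * ‖gradient f wt‖ ^ 2)
    (γ : Fin N → ℝ) (hγ0 : ∀ k, 0 ≤ γ k) (hγ1 : ∀ k, γ k ≤ 1)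
    (wplus : Fin N → E)
    (hinexact : ∀ k,
      ‖gradient (F k) (wplus k) + μ • (wplus k - wt)‖ ≤ γ k * ‖gradient (F k) wt‖)
    {Γ : ℝ} (hΓ0 : 0 ≤ Γ) (hΓ1 : Γ ≤ 1) (hγΓ : ∀ k, γ k ≤ Γ)
    {K : ℕ} (hK : 1 ≤ K)
    (ρ : ℝ)
    (hρ : ρ = 1 / μ - Γ * B / μ
        - Real.sqrt 2 * B * (1 + Γ) / ((μ - Lm) * Real.sqrt K)
        - L * B * (1 + Γ) / ((μ - Lm) * μ)
        - L * (1 + Γ) ^ 2 * B ^ 2 / (2 * (μ - Lm) ^ 2)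
        - L * B ^ 2 * (1 + Γ) ^ 2 * (2 * Real.sqrt (2 * K) + 2) / ((μ - Lm) ^ 2 * K)) :
    ∑ s : Fin K → Fin N, (∏ j, p (s j)) * f ((1 / (K : ℝ)) • ∑ j, wplus (s j))
      ≤ f wt - ρ * ‖gradient f wt‖ ^ 2 :=
  fedprox_variable_gamma_descent_general p hp hp1 F f hf hL hFdiff hFlip hLm hμ hcurv wt hB hdissim
    γ wplus hinexact hΓ0 hγΓ hK ρ hρ
end

section
/- Bound on the gradient correction term M. Assume each F k is differentiable with L-Lipschitz gradient, let μ > 0, μ̄ > 0, wᵗ ∈ E, and 0 ≤ γ ≤ 1. For each k, let w k⁺ be a γ-inexact solution of min h k (i.e. ‖∇F k (w k⁺) + μ·(w k⁺ − wᵗ)‖ ≤ γ·‖∇F k (wᵗ)‖) and assume ‖w k⁺ − wᵗ‖ ≤ ((1+γ)/μ̄)·‖∇F k (wᵗ)‖. If the local functions are B-dissimilar at wᵗ (∑ k, p k·‖∇F k (wᵗ)‖² ≤ B²·‖∇f(wᵗ)‖², B ≥ 0), then the averaged iterate w̄ = ∑ k, p k · w k⁺ satisfies ‖μ·(wᵗ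 − w̄) − ∇f(wᵗ)‖ ≤ (L·(1+γ)/μ̄ + γ)·B·‖∇f(wᵗ)‖. -/
open scoped BigOperators

/-!
Since `∑ k, p k = 1`, the correction
`μ • (wᵗ - w̄) - ∇f wᵗ` is the `p`-average of the local corrections
`μ • (wᵗ - w k⁺) - ∇F k wᵗ`. Up to sign, each of these is the inexactness residual
`∇F k (w k⁺) + μ • (w k⁺ - wᵗ)` plus the gradient difference `∇F k wᵗ - ∇F k (w k⁺)`, hence has norm
at most `(γ + L (1 + γ) / μ̄) ‖∇F k wᵗ‖`. Jensen's inequality for `x ↦ x²` turns the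
dissimilarity bound into `∑ k, p k ‖∇F k wᵗ‖ ≤ B ‖∇f wᵗ‖`.
-/

open Finset

theorem HasGradientAt.sum_const_mul {E ι : Type*} [NormedAddCommGroup E] [InnerProductSpace ℝ E]
    [CompleteSpace E] {s : Finset ι} {F : ι → E → ℝ} {g : ι → E} {x : E}
    (p : ι → ℝ) (hF : ∀ i ∈ s, HasGradientAt (F i) (g i) x) :
    HasGradientAt (fun w ↦ ∑ i ∈ s, p i * F i w) (∑ i ∈ s, p i • g i) x := by
  rw [hasGradientAt_iff_hasFDerivAt, map_sum]
  simp only [map_smul]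
  exact HasFDerivAt.fun_sum fun i hi ↦ (hF i hi).hasFDerivAt.const_mul (p i)

theorem LipschitzWith.norm_smul_sub_sub_le {E : Type*} [NormedAddCommGroup E] [NormedSpace ℝ E]
    {K : NNReal} {G : E → E} (hG : LipschitzWith K G) (μ : ℝ) (w v : E) :
    ‖μ • (w - v) - G w‖ ≤ ‖G v + μ • (v - w)‖ + K * ‖v - w‖ := by
  have hsplit : μ • (w - v) - G w = -((G v + μ • (v - w)) + (G w - G v)) := by module
  rw [hsplit, norm_neg]
  refine (norm_add_le _ _).trans (add_le_add_right ?_ _)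
  simpa only [dist_eq_norm, norm_sub_rev v w] using hG.dist_le_mul w v

theorem sum_smul_smul_sub_sub_eq {ι R M : Type*} [CommRing R] [AddCommGroup M] [Module R M]
    {s : Finset ι} {w : ι → R} (hw : ∑ i ∈ s, w i = 1) (μ : R) (x : M) (y z : ι → M) :
    ∑ i ∈ s, w i • (μ • (x - y i) - z i) = μ • (x - ∑ i ∈ s, w i • y i) - ∑ i ∈ s, w i • z i := by
  simp only [smul_sub, sum_sub_distrib, smul_sum, smul_comm μ (w _), ← sum_smul, hw, one_smul]

section WeightedMean

variable {ι : Type*} {s : Finset ι} {w : ι → ℝ}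

theorem norm_sum_smul_le {E : Type*} [SeminormedAddCommGroup E] [NormedSpace ℝ E]
    (hw : ∀ i ∈ s, 0 ≤ w i) (x : ι → E) :
    ‖∑ i ∈ s, w i • x i‖ ≤ ∑ i ∈ s, w i * ‖x i‖ :=
  (norm_sum_le _ _).trans_eq <| sum_congr rfl fun i hi ↦ norm_smul_of_nonneg (hw i hi) (x i)

theorem sum_mul_le_of_sum_mul_sq_le (hw : ∀ i ∈ s, 0 ≤ w i) (hw1 : ∑ i ∈ s, w i = 1)
    {z : ι → ℝ} {c : ℝ} (hc : 0 ≤ c) (h : ∑ i ∈ s, w i * z i ^ 2 ≤ c ^ 2) :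
    ∑ i ∈ s, w i * z i ≤ c :=
  le_of_sq_le_sq ((Real.pow_arith_mean_le_arith_mean_pow_of_even s w z hw hw1 even_two).trans h) hc

end WeightedMean

theorem gradient_correction_bound_general
    {E : Type*} [NormedAddCommGroup E] [InnerProductSpace ℝ E] [CompleteSpace E]
    {N : ℕ} (p : Fin N → ℝ)
    (hp : ∀ k, 0 ≤ p k) (hp1 : ∑ k, p k = 1)
    (F : Fin N → E → ℝ) (f : E → ℝ) (hf : ∀ w, f w = ∑ k, p k * F k w)
    {L : ℝ} (hL : 0 ≤ L)
    (hFdiff : ∀ k, Differentiable ℝ (F k))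
    (hFlip : ∀ k, LipschitzWith (Real.toNNReal L) (gradient (F k)))
    {μ μbar : ℝ} (hμbar : 0 < μbar)
    (wt : E) {γ : ℝ} (hγ0 : 0 ≤ γ)
    (wplus : Fin N → E)
    (hinexact : ∀ k,
      ‖gradient (F k) (wplus k) + μ • (wplus k - wt)‖ ≤ γ * ‖gradient (F k) wt‖)
    (hdist : ∀ k, ‖wplus k - wt‖ ≤ ((1 + γ) / μbar) * ‖gradient (F k) wt‖)
    {B : ℝ} (hB : 0 ≤ B)
    (hdissim : ∑ k, p k * ‖gradient (F k) wt‖ ^ 2 ≤ B ^ 2 * ‖gradient f wt‖ ^ 2) :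
    ‖μ • (wt - ∑ k, p k • wplus k) - gradient f wt‖
      ≤ (L * (1 + γ) / μbar + γ) * B * ‖gradient f wt‖ := by
  set C := L * (1 + γ) / μbar + γ
  have hgrad : gradient f wt = ∑ k, p k • gradient (F k) wt := by
    obtain rfl : f = fun w ↦ ∑ k, p k * F k w := funext hf
    exact (HasGradientAt.sum_const_mul p fun k _ ↦ (hFdiff k wt).hasGradientAt).gradient
  have hlocal : ∀ k, ‖μ • (wt - wplus k) - gradient (F k) wt‖ ≤ C * ‖gradient (F k) wt‖ := by
    intro k
    calc _ ≤ γ * ‖gradient (F k) wt‖ + L * (((1 + γ) / μbar) * ‖gradient (F k) wt‖) := by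
          refine ((hFlip k).norm_smul_sub_sub_le μ wt (wplus k)).trans (add_le_add (hinexact k) ?_)
          rw [Real.coe_toNNReal L hL]
          exact mul_le_mul_of_nonneg_left (hdist k) hL
      _ = C * ‖gradient (F k) wt‖ := by ring
  have hmean : ∑ k, p k * ‖gradient (F k) wt‖ ≤ B * ‖gradient f wt‖ :=
    sum_mul_le_of_sum_mul_sq_le (fun k _ ↦ hp k) hp1 (by positivity) (by rwa [mul_pow])
  calc ‖μ • (wt - ∑ k, p k • wplus k) - gradient f wt‖
      = ‖∑ k, p k • (μ • (wt - wplus k) - gradient (F k) wt)‖ := by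
        rw [hgrad, sum_smul_smul_sub_sub_eq hp1]
    _ ≤ ∑ k, p k * (C * ‖gradient (F k) wt‖) :=
        (norm_sum_smul_le (fun k _ ↦ hp k) _).trans <|
          sum_le_sum fun k _ ↦ mul_le_mul_of_nonneg_left (hlocal k) (hp k)
    _ = C * ∑ k, p k * ‖gradient (F k) wt‖ := by
        rw [mul_sum]
        exact sum_congr rfl fun k _ ↦ mul_left_comm _ _ _
    _ ≤ C * (B * ‖gradient f wt‖) := mul_le_mul_of_nonneg_left hmean (by positivity)
    _ = C * B * ‖gradient f wt‖ := (mul_assoc _ _ _).symm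

/-- Bound on the gradient correction term `M`. -/
theorem gradient_correction_bound
    {E : Type*} [NormedAddCommGroup E] [InnerProductSpace ℝ E] [CompleteSpace E]
    {N : ℕ} (hN : 1 ≤ N) (p : Fin N → ℝ)
    (hp : ∀ k, 0 ≤ p k) (hp1 : ∑ k, p k = 1)
    (F : Fin N → E → ℝ) (f : E → ℝ) (hf : ∀ w, f w = ∑ k, p k * F k w)
    {L : ℝ} (hL : 0 ≤ L)
    (hFdiff : ∀ k, Differentiable ℝ (F k))
    (hFlip : ∀ k, LipschitzWith (Real.toNNReal L) (gradient (F k)))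
    {μ μbar : ℝ} (hμ : 0 < μ) (hμbar : 0 < μbar)
    (wt : E) {γ : ℝ} (hγ0 : 0 ≤ γ) (hγ1 : γ ≤ 1)
    (wplus : Fin N → E)
    (hinexact : ∀ k,
      ‖gradient (F k) (wplus k) + μ • (wplus k - wt)‖ ≤ γ * ‖gradient (F k) wt‖)
    (hdist : ∀ k, ‖wplus k - wt‖ ≤ ((1 + γ) / μbar) * ‖gradient (F k) wt‖)
    {B : ℝ} (hB : 0 ≤ B)
    (hdissim : ∑ k, p k * ‖gradient (F k) wt‖ ^ 2 ≤ B ^ 2 * ‖gradient f wt‖ ^ 2) :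
    ‖μ • (wt - ∑ k, p k • wplus k) - gradient f wt‖
      ≤ (L * (1 + γ) / μbar + γ) * B * ‖gradient f wt‖ :=
  gradient_correction_bound_general p hp hp1 F f hf hL hFdiff hFlip hμbar wt hγ0 wplus hinexact
    hdist hB hdissim
end
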